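/- arXiv:2506.13883 — 4 statements merged into one kernel-verified Lean document; each statement's English description precedes it below -/
import Mathlib

section
/- Let N ≥ 2 be an even integer and t a real number with t ≤ N/e². Then e^t ≤ (1 + e^{-N}/16) · ∑_{k=0}^{N} t^k/k!. -/
/-!
For `t ≤ 0`, `(-1)^n (exp x - ∑_{k<n} x^k/k!)` is nonnegative on `x ≤ 0` by induction on `n`: it
vanishes at `0` and its derivative is minus the previous one. For even `N` this puts `exp` below
its Taylor polynomial of degree `N`.

For `t > 0` the tail `∑_{k>N} t^k/k!` is dominated by a geometric series of ratio
`t/(N+2) ≤ e^{-2}` whose first term is at most `e^{-(N+3)}` by Stirling's bound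
`(N+1)! ≥ e ((N+1)/e)^{N+1}`. So the tail is at most `e^{-N}/(e³-e) < e^{-N}/17`, which
`e^{-N} e^t / 16` absorbs because `e^t ≥ 1`.
-/

open Finset Real
open scoped Nat

theorem hasDerivAt_sum_range_succ_pow_div_factorial (n : ℕ) (x : ℝ) :
    HasDerivAt (fun y : ℝ => ∑ k ∈ range (n + 1), y ^ k / k !) (∑ k ∈ range n, x ^ k / k !) x := by
  have hterm (k : ℕ) : HasDerivAt (fun y : ℝ => y ^ (k + 1) / (k + 1)!) (x ^ k / k !) x := by
    refine ((hasDerivAt_pow (k + 1) x).div_const _).congr_deriv ?_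
    rw [Nat.factorial_succ]; push_cast; field_simp
  simp only [sum_range_succ', pow_zero, Nat.factorial_zero, Nat.cast_one, div_one]
  exact (HasDerivAt.fun_sum fun k _ => hterm k).add_const _

theorem neg_one_pow_mul_exp_sub_sum_range_nonneg {x : ℝ} (hx : x ≤ 0) (n : ℕ) :
    0 ≤ (-1) ^ n * (exp x - ∑ k ∈ range n, x ^ k / k !) := by
  induction n generalizing x with
  | zero => simpa using (exp_pos x).le
  | succ n ih =>
    let g := fun y : ℝ => (-1) ^ (n + 1) * (exp y - ∑ k ∈ range (n + 1), y ^ k / k !)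
    have hg' (y : ℝ) : HasDerivAt g (-((-1) ^ n * (exp y - ∑ k ∈ range n, y ^ k / k !))) y := by
      refine (((hasDerivAt_exp y).sub
        (hasDerivAt_sum_range_succ_pow_div_factorial n y)).const_mul _).congr_deriv ?_
      ring
    have hanti : AntitoneOn g (Set.Iic 0) := by
      refine antitoneOn_of_hasDerivWithinAt_nonpos (convex_Iic 0)
        (fun y _ => (hg' y).continuousAt.continuousWithinAt) (fun y _ => (hg' y).hasDerivWithinAt)
        fun y hy => ?_
      rw [interior_Iic] at hy
      exact neg_nonpos.mpr (ih hy.le)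
    have hg0 : g 0 = 0 := by simp [g, sum_range_succ']
    exact hg0 ▸ hanti hx Set.self_mem_Iic hx

theorem exp_le_sum_range_of_nonpos {x : ℝ} (hx : x ≤ 0) {n : ℕ} (hn : Even n) :
    exp x ≤ ∑ k ∈ range (n + 1), x ^ k / k ! := by
  have h := neg_one_pow_mul_exp_sub_sum_range_nonneg hx (n + 1)
  rw [(hn.add_one).neg_one_pow] at h
  linarith

theorem exp_sub_sum_range_le_div {x : ℝ} (hx : 0 ≤ x) {n : ℕ} (hxn : x < n + 1) :
    exp x - ∑ k ∈ range n, x ^ k / k ! ≤ x ^ n / n ! / (1 - x / (n + 1)) := by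
  have hr : x / (n + 1) < 1 := (div_lt_one (by positivity)).mpr hxn
  have htail : HasSum (fun k => x ^ (k + n) / (k + n)!) (exp x - ∑ k ∈ range n, x ^ k / k !) := by
    refine (hasSum_nat_add_iff' (f := fun k => x ^ k / k !) n).mpr ?_
    rw [exp_eq_exp_ℝ]
    exact NormedSpace.expSeries_div_hasSum_exp x
  have hgeom := (hasSum_geometric_of_lt_one (by positivity) hr).mul_left (x ^ n / n !)
  rw [div_eq_mul_inv]
  refine hasSum_le (fun k => ?_) htail hgeom
  have hfact : (n ! : ℝ) * (n + 1) ^ k ≤ (k + n)! := by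
    rw [add_comm k n]; exact_mod_cast Nat.factorial_mul_pow_le_factorial
  calc x ^ (k + n) / (k + n)! ≤ x ^ (k + n) / (n ! * (n + 1) ^ k) := by gcongr
    _ = x ^ n / n ! * (x / (n + 1)) ^ k := by rw [pow_add, div_pow]; field_simp

theorem exp_one_mul_div_exp_one_pow_le_factorial {n : ℕ} (hn : 2 ≤ n) :
    exp 1 * (n / exp 1) ^ n ≤ n ! := by
  refine le_trans ?_ (Stirling.le_factorial_stirling n)
  gcongr
  apply Real.le_sqrt_of_sq_le
  have he := exp_one_lt_d9
  have hπ := pi_gt_three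
  have : (2 : ℝ) ≤ n := by exact_mod_cast hn
  have he2 : exp 1 ^ 2 < 8 := by nlinarith [exp_pos 1]
  nlinarith

theorem pow_succ_div_factorial_le_of_le_div_exp_two {N : ℕ} (hN : 1 ≤ N) {t : ℝ} (ht0 : 0 ≤ t)
    (ht : t ≤ N / exp 2) : t ^ (N + 1) / (N + 1)! ≤ (exp 1 ^ (N + 3))⁻¹ := by
  have he : 0 < exp 1 := exp_pos 1
  have hfac : ((N + 1 : ℕ) / exp 1) ^ (N + 1) ≤ (N + 1)! / exp 1 := by
    rw [le_div_iff₀ he, mul_comm]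
    exact exp_one_mul_div_exp_one_pow_le_factorial (by omega)
  have hpow : ((N : ℝ) / (N + 1)) ^ (N + 1) ≤ (exp 1)⁻¹ := by
    have h := one_sub_div_pow_le_exp_neg (n := N + 1) (t := 1) (by simp)
    rw [exp_neg] at h
    convert h using 2
    push_cast; field_simp; ring
  have hexp2 : exp 2 = exp 1 ^ 2 := by rw [← exp_nat_mul]; norm_num
  rw [div_le_iff₀ (by positivity)]
  calc t ^ (N + 1) ≤ (N / exp 1 ^ 2) ^ (N + 1) := by rw [← hexp2]; gcongr
    _ = ((N : ℝ) / (N + 1)) ^ (N + 1) * ((N + 1 : ℕ) / exp 1) ^ (N + 1) / exp 1 ^ (N + 1) := by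
      rw [← mul_pow, ← div_pow]; congr 1; push_cast; field_simp
    _ ≤ (exp 1)⁻¹ * ((N + 1)! / exp 1) / exp 1 ^ (N + 1) := by gcongr
    _ = (exp 1 ^ (N + 3))⁻¹ * (N + 1)! := by field_simp; ring

theorem exp_sub_sum_range_le_of_le_div_exp_two {N : ℕ} (hN : 1 ≤ N) {t : ℝ} (ht0 : 0 ≤ t)
    (ht : t ≤ N / exp 2) : exp t - ∑ k ∈ range (N + 1), t ^ k / k ! ≤ exp (-N) / 17 := by
  have he := exp_one_gt_d9
  have hexp2 : exp 2 = exp 1 ^ 2 := by rw [← exp_nat_mul]; norm_num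
  have ht' : t ≤ N / exp 1 ^ 2 := hexp2 ▸ ht
  have hN0 : (0 : ℝ) ≤ N := N.cast_nonneg
  have htN : t ≤ N := ht'.trans (div_le_self hN0 (by nlinarith))
  have hratio : t / (N + 1 + 1) ≤ (exp 1 ^ 2)⁻¹ := by
    rw [div_le_iff₀ (by positivity)]
    calc t ≤ N / exp 1 ^ 2 := ht'
      _ ≤ (exp 1 ^ 2)⁻¹ * (N + 1 + 1) := by rw [div_eq_inv_mul]; gcongr; linarith
  have hq : (exp 1 ^ 2)⁻¹ < 1 := inv_lt_one_of_one_lt₀ (by nlinarith)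
  calc exp t - ∑ k ∈ range (N + 1), t ^ k / k !
      ≤ t ^ (N + 1) / (N + 1)! / (1 - t / (N + 1 + 1)) := by
        exact_mod_cast exp_sub_sum_range_le_div ht0 (n := N + 1) (by push_cast; linarith)
    _ ≤ (exp 1 ^ (N + 3))⁻¹ / (1 - (exp 1 ^ 2)⁻¹) := by
        gcongr
        exact pow_succ_div_factorial_le_of_le_div_exp_two hN ht0 ht
    _ = exp (-N) / (exp 1 ^ 3 - exp 1) := by
        rw [exp_neg, ← exp_one_pow]; field_simp; ring
    _ ≤ exp (-N) / 17 := by gcongr; nlinarith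

theorem stmt2_general (N : ℕ) (hNeven : Even N) (t : ℝ)
    (ht : t ≤ (N : ℝ) / Real.exp 2) :
    Real.exp t ≤ (1 + Real.exp (-(N : ℝ)) / 16) *
      ∑ k ∈ Finset.range (N + 1), t ^ k / (Nat.factorial k : ℝ) := by
  have hε : 0 < exp (-N) := exp_pos _
  rcases le_or_gt t 0 with ht0 | ht0
  · nlinarith [exp_le_sum_range_of_nonpos ht0 hNeven, exp_pos t]
  · have hN : 1 ≤ N := Nat.one_le_iff_ne_zero.mpr <| by rintro rfl; simp at ht; linarith
    have htail := exp_sub_sum_range_le_of_le_div_exp_two hN ht0.le ht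
    have hexp_t : 1 ≤ exp t := one_le_exp ht0.le
    have hε1 : exp (-N) ≤ 1 := exp_le_one_iff.mpr (by simp)
    nlinarith [mul_le_mul_of_nonneg_left htail (by positivity : (0 : ℝ) ≤ 1 + exp (-N) / 16),
      mul_nonneg hε.le (sub_nonneg.mpr hε1), mul_nonneg hε.le (sub_nonneg.mpr hexp_t)]

theorem stmt2 (N : ℕ) (hN2 : 2 ≤ N) (hNeven : Even N) (t : ℝ)
    (ht : t ≤ (N : ℝ) / Real.exp 2) :
    Real.exp t ≤ (1 + Real.exp (-(N : ℝ)) / 16) *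
      ∑ k ∈ Finset.range (N + 1), t ^ k / (Nat.factorial k : ℝ) :=
  stmt2_general N hNeven t ht
end

section
/- Let d₀ = b₀² − 4a₀c₀ < 0 and d = b² − 4ac < 0 be discriminants of positive definite integral binary quadratic forms (a₀, a > 0). Let z₀ = (−b₀ + i√|d₀|)/(2a₀) and z = (−b + i√|d|)/(2a) be the corresponding points in the upper half plane, and let u(z,w) = |z−w|²/(4 Im(z) Im(w)). Then 4u(z₀, z) + 2 = (2/√|d·d₀|) · (2(a c₀ + a₀ c) − b b₀). -/
/-!
Writing `u` for the point-pair invariant, expanding `‖z - w‖²` gives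
`4 u(z, w) + 2 = (|z|² + |w|² - 2 Re z Re w) / (Im z Im w)`.
The Heegner point of `[a, b, c]` has `Re z = -b / 2a`, `Im z = √|d| / 2a` and, being a root of
`a z² + b z + c`, `|z|² = c / a`; substituting these turns the right-hand side into
`2 (2 (a c₀ + a₀ c) - b b₀) / √|d d₀|`.
-/

open Complex

noncomputable def pointPairInvariant (z w : ℂ) : ℝ := ‖z - w‖ ^ 2 / (4 * z.im * w.im)

theorem four_mul_pointPairInvariant_add_two {z w : ℂ} (hz : z.im ≠ 0) (hw : w.im ≠ 0) :
    4 * pointPairInvariant z w + 2 = (normSq z + normSq w - 2 * (z.re * w.re)) / (z.im * w.im) := by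
  rw [pointPairInvariant, Complex.sq_norm]
  simp only [normSq_apply, sub_re, sub_im]
  field_simp
  ring

noncomputable def heegnerPoint (a b c : ℝ) : ℂ := (-b + I * √|b ^ 2 - 4 * a * c|) / (2 * a)

section HeegnerPoint

variable {a b c : ℝ}

theorem heegnerPoint_re : (heegnerPoint a b c).re = -b / (2 * a) := by
  rw [heegnerPoint, ← ofReal_ofNat, ← ofReal_mul, div_ofReal_re]
  simp

theorem heegnerPoint_im : (heegnerPoint a b c).im = √|b ^ 2 - 4 * a * c| / (2 * a) := by
  rw [heegnerPoint, ← ofReal_ofNat, ← ofReal_mul, div_ofReal_im]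
  simp

theorem normSq_heegnerPoint (ha : a ≠ 0) (hd : b ^ 2 - 4 * a * c ≤ 0) :
    normSq (heegnerPoint a b c) = c / a := by
  rw [normSq_apply, heegnerPoint_re, heegnerPoint_im, abs_of_nonpos hd]
  field_simp
  rw [Real.sq_sqrt (by linarith)]
  ring

theorem heegnerPoint_im_pos (ha : 0 < a) (hd : b ^ 2 - 4 * a * c < 0) :
    0 < (heegnerPoint a b c).im := by
  rw [heegnerPoint_im]
  have hd_abs : 0 < |b ^ 2 - 4 * a * c| := abs_pos.mpr hd.ne
  positivity

theorem four_mul_pointPairInvariant_heegnerPoint_add_two {a₀ b₀ c₀ : ℝ} (ha₀ : 0 < a₀)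
    (ha : 0 < a) (hd₀ : b₀ ^ 2 - 4 * a₀ * c₀ < 0) (hd : b ^ 2 - 4 * a * c < 0) :
    4 * pointPairInvariant (heegnerPoint a₀ b₀ c₀) (heegnerPoint a b c) + 2
      = 2 / √|(b ^ 2 - 4 * a * c) * (b₀ ^ 2 - 4 * a₀ * c₀)| * (2 * (a * c₀ + a₀ * c) - b * b₀) := by
  rw [four_mul_pointPairInvariant_add_two (heegnerPoint_im_pos ha₀ hd₀).ne'
      (heegnerPoint_im_pos ha hd).ne', normSq_heegnerPoint ha₀.ne' hd₀.le,
    normSq_heegnerPoint ha.ne' hd.le, heegnerPoint_re, heegnerPoint_re, heegnerPoint_im,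
    heegnerPoint_im, abs_mul, Real.sqrt_mul (abs_nonneg _)]
  have hs : 0 < √|b ^ 2 - 4 * a * c| := Real.sqrt_pos.mpr (abs_pos.mpr hd.ne)
  have hs₀ : 0 < √|b₀ ^ 2 - 4 * a₀ * c₀| := Real.sqrt_pos.mpr (abs_pos.mpr hd₀.ne)
  field_simp

end HeegnerPoint

theorem stmt9 (a₀ b₀ c₀ a b c : ℤ) (ha₀ : 0 < a₀) (ha : 0 < a)
    (hd₀ : b₀ ^ 2 - 4 * a₀ * c₀ < 0) (hd : b ^ 2 - 4 * a * c < 0) :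
    let d₀ : ℤ := b₀ ^ 2 - 4 * a₀ * c₀
    let d : ℤ := b ^ 2 - 4 * a * c
    let z₀ : ℂ := (-(b₀ : ℂ) + Complex.I * (Real.sqrt |(d₀ : ℝ)| : ℂ)) / (2 * (a₀ : ℂ))
    let z : ℂ := (-(b : ℂ) + Complex.I * (Real.sqrt |(d : ℝ)| : ℂ)) / (2 * (a : ℂ))
    4 * (‖z₀ - z‖ ^ 2 / (4 * z₀.im * z.im)) + 2
      = 2 / Real.sqrt |(d : ℝ) * (d₀ : ℝ)| *
          (2 * ((a : ℝ) * (c₀ : ℝ) + (a₀ : ℝ) * (c : ℝ)) - (b : ℝ) * (b₀ : ℝ)) := by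
  intro d₀ d z₀ z
  have key := four_mul_pointPairInvariant_heegnerPoint_add_two (a₀ := a₀) (b₀ := b₀) (c₀ := c₀)
    (a := a) (b := b) (c := c) (by exact_mod_cast ha₀) (by exact_mod_cast ha)
    (by exact_mod_cast hd₀) (by exact_mod_cast hd)
  simp only [pointPairInvariant, heegnerPoint, ofReal_intCast] at key
  push_cast [z₀, z, d₀, d]
  exact key
end

section
/- Let I be a finite set of primes, and let g be a multiplicative function satisfying |g(p^a)| ≤ 2^{4a}/√p for odd a and |g(p^a)| ≤ 2^{4a} for even a, with all p ∈ I satisfying p ≥ 2^{14}. Let ν be the multiplicative function with ν(p^a) = 1/a!. Then ∑_{n : p|n ⇒ p∈I} 8^{Ω(n)} ν(n) |g(n)| / √n ≤ exp(2^{15} ∑_{p∈I} 1/p). -/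
/-!
Multiplicativity of the summand turns the sum over `I`-factored integers into an Euler product
over `p ∈ I`. In each local factor the term `a = 0` is `1`, and for `a ≥ 1` the growth bounds on `g`
together with `√p ≥ 2 ^ 7` give `8 ^ a |g (p ^ a)| / √p ^ a ≤ 2 ^ 14 / p`; since `1 / a! ≤ 2 ^ (1 - a)`,
the local factor is at most `1 + 2 ^ 15 / p ≤ exp (2 ^ 15 / p)`.
-/

open Finset Real

noncomputable def eulerTerm (g : ℕ → ℝ) (n : ℕ) : ℝ :=
  8 ^ n.primeFactorsList.length *
    (∏ q ∈ n.primeFactors, (1:ℝ) / (Nat.factorial (n.factorization q) : ℝ)) *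
    |g n| / Real.sqrt n

lemma tsum_ite_primeFactors_subset_eq_tsum_factoredNumbers {M : Type*} [AddCommMonoid M]
    [TopologicalSpace M] (f : ℕ → M) (s : Finset ℕ) :
    (∑' n : ℕ, if n ≠ 0 ∧ n.primeFactors ⊆ s then f n else 0) =
      ∑' m : Nat.factoredNumbers s, f m := by
  rw [_root_.tsum_subtype]
  congr 1
  ext n
  simp only [Set.indicator_apply, Nat.mem_factoredNumbers_iff_primeFactors_subset]

lemma Real.sqrt_pow {x : ℝ} (hx : 0 ≤ x) (n : ℕ) : √(x ^ n) = √x ^ n := by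
  rw [← sqrt_sq (by positivity : 0 ≤ √x ^ n), ← pow_mul, mul_comm, pow_mul, sq_sqrt hx]

lemma eight_pow_mul_div_sqrt_pow_le {p y : ℝ} (hp : 2 ^ 14 ≤ p) {a : ℕ} (ha : a ≠ 0)
    (hodd : Odd a → y ≤ 2 ^ (4 * a) / √p) (heven : Even a → y ≤ 2 ^ (4 * a)) :
    8 ^ a * y / √p ^ a ≤ 2 ^ 14 / p := by
  have hs : 2 ^ 7 ≤ √p := le_sqrt_of_sq_le (by linarith)
  have hs0 : 0 < √p := by linarith
  have hsq : √p ^ 2 = p := sq_sqrt (by linarith)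
  set t : ℝ := 2 ^ 7 / √p
  have ht0 : 0 ≤ t := by positivity
  have ht1 : t ≤ 1 := (div_le_one hs0).mpr hs
  have h8 : (8:ℝ) ^ a * 2 ^ (4 * a) / √p ^ a = t ^ a := by
    rw [div_pow, pow_mul, ← mul_pow]
    norm_num
  rcases Nat.even_or_odd a with he | ho
  · have ha2 : 2 ≤ a := by obtain ⟨k, rfl⟩ := he; omega
    calc 8 ^ a * y / √p ^ a ≤ 8 ^ a * 2 ^ (4 * a) / √p ^ a := by gcongr; exact heven he
      _ = t ^ a := h8
      _ ≤ t ^ 2 := pow_le_pow_of_le_one ht0 ht1 ha2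
      _ = 2 ^ 14 / p := by rw [div_pow, hsq]; norm_num
  · calc 8 ^ a * y / √p ^ a ≤ 8 ^ a * (2 ^ (4 * a) / √p) / √p ^ a := by gcongr; exact hodd ho
      _ = t ^ a / √p := by rw [← h8]; ring
      _ ≤ t / √p := by gcongr; exact pow_le_of_le_one ht0 ht1 ha
      _ = 2 ^ 7 / p := by rw [div_div, ← sq, hsq]
      _ ≤ 2 ^ 14 / p := by gcongr <;> norm_num

lemma prod_primeFactors_inv_factorial_mul {m n : ℕ} (hmn : m.Coprime n) (hm : m ≠ 0)
    (hn : n ≠ 0) :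
    ∏ q ∈ (m * n).primeFactors, (1:ℝ) / ((m * n).factorization q).factorial =
      (∏ q ∈ m.primeFactors, (1:ℝ) / (m.factorization q).factorial) *
        ∏ q ∈ n.primeFactors, (1:ℝ) / (n.factorization q).factorial := by
  have hprod (k : ℕ) : ∏ q ∈ k.primeFactors, (1:ℝ) / (k.factorization q).factorial =
      k.factorization.prod fun _ a ↦ (1:ℝ) / a.factorial := by
    rw [Finsupp.prod, Nat.support_factorization]
  rw [hprod, hprod, hprod, Nat.factorization_mul hm hn]
  refine Finsupp.prod_add_index_of_disjoint ?_ _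
  rw [Nat.support_factorization, Nat.support_factorization]
  exact hmn.disjoint_primeFactors

section EulerTerm

variable {g : ℕ → ℝ} {p : ℕ}

lemma eulerTerm_nonneg (n : ℕ) : 0 ≤ eulerTerm g n := by
  unfold eulerTerm
  positivity

lemma eulerTerm_one (hg1 : g 1 = 1) : eulerTerm g 1 = 1 := by
  simp [eulerTerm, hg1]

lemma eulerTerm_mul (hgmul : ∀ m n : ℕ, m.Coprime n → g (m * n) = g m * g n) {m n : ℕ}
    (hmn : m.Coprime n) : eulerTerm g (m * n) = eulerTerm g m * eulerTerm g n := by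
  rcases eq_or_ne m 0 with rfl | hm
  · simp [eulerTerm]
  rcases eq_or_ne n 0 with rfl | hn
  · simp [eulerTerm]
  have hΩ := ArithmeticFunction.cardFactors_mul hm hn
  simp only [ArithmeticFunction.cardFactors_apply] at hΩ
  unfold eulerTerm
  rw [hΩ, prod_primeFactors_inv_factorial_mul hmn hm hn, hgmul m n hmn, abs_mul, Nat.cast_mul,
    sqrt_mul (Nat.cast_nonneg m), pow_add]
  ring

lemma eulerTerm_prime_pow (hp : p.Prime) (a : ℕ) :
    eulerTerm g (p ^ a) = 8 ^ a / (a.factorial : ℝ) * |g (p ^ a)| / √p ^ a := by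
  rcases eq_or_ne a 0 with rfl | ha
  · simp [eulerTerm]
  unfold eulerTerm
  rw [hp.primeFactorsList_pow, List.length_replicate, Nat.primeFactors_prime_pow ha hp,
    prod_singleton, hp.factorization_pow, Finsupp.single_eq_same, Nat.cast_pow,
    Real.sqrt_pow (Nat.cast_nonneg p)]
  ring

-- A crude bound, valid at every prime: the Euler product needs summability also below `2 ^ 14`.
lemma eulerTerm_prime_pow_le_pow_div_factorial (hp : p.Prime)
    (hodd : ∀ a, Odd a → |g (p ^ a)| ≤ 2 ^ (4 * a) / √p)
    (heven : ∀ a, Even a → |g (p ^ a)| ≤ 2 ^ (4 * a)) (a : ℕ) :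
    eulerTerm g (p ^ a) ≤ 128 ^ a / a.factorial := by
  have hs : 1 ≤ √p := one_le_sqrt.mpr (by exact_mod_cast hp.one_le)
  have hg : |g (p ^ a)| ≤ 2 ^ (4 * a) := by
    rcases Nat.even_or_odd a with he | ho
    · exact heven a he
    · exact (hodd a ho).trans (div_le_self (by positivity) hs)
  calc eulerTerm g (p ^ a) = 8 ^ a / (a.factorial : ℝ) * |g (p ^ a)| / √p ^ a :=
        eulerTerm_prime_pow hp a
    _ ≤ 8 ^ a / (a.factorial : ℝ) * 2 ^ (4 * a) / 1 := by gcongr; exact one_le_pow₀ hs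
    _ = 128 ^ a / a.factorial := by
        rw [div_one, pow_mul, div_mul_eq_mul_div, ← mul_pow]
        norm_num

lemma summable_eulerTerm_prime_pow (hp : p.Prime)
    (hodd : ∀ a, Odd a → |g (p ^ a)| ≤ 2 ^ (4 * a) / √p)
    (heven : ∀ a, Even a → |g (p ^ a)| ≤ 2 ^ (4 * a)) :
    Summable (fun a ↦ eulerTerm g (p ^ a)) :=
  .of_nonneg_of_le (fun _ ↦ eulerTerm_nonneg _)
    (eulerTerm_prime_pow_le_pow_div_factorial hp hodd heven) (Real.summable_pow_div_factorial _)

lemma eulerTerm_prime_pow_succ_le (hp : p.Prime) (hp14 : 2 ^ 14 ≤ p)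
    (hodd : ∀ a, Odd a → |g (p ^ a)| ≤ 2 ^ (4 * a) / √p)
    (heven : ∀ a, Even a → |g (p ^ a)| ≤ 2 ^ (4 * a)) (l : ℕ) :
    eulerTerm g (p ^ (l + 1)) ≤ 2 ^ 14 / p * (1 / 2) ^ l := by
  have hfac : 2 ^ l ≤ (l + 1).factorial := by
    simpa [add_comm] using Nat.factorial_mul_pow_le_factorial (m := 1) (n := l)
  have hinv : 1 / ((l + 1).factorial : ℝ) ≤ (1 / 2) ^ l := by
    rw [one_div_pow]
    exact one_div_le_one_div_of_le (by positivity) (by exact_mod_cast hfac)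
  calc eulerTerm g (p ^ (l + 1))
      = 8 ^ (l + 1) * |g (p ^ (l + 1))| / √p ^ (l + 1) * (1 / ((l + 1).factorial : ℝ)) := by
        rw [eulerTerm_prime_pow hp]; ring
    _ ≤ 2 ^ 14 / p * (1 / 2) ^ l :=
        mul_le_mul (eight_pow_mul_div_sqrt_pow_le (by exact_mod_cast hp14) l.succ_ne_zero
          (hodd _) (heven _)) hinv (by positivity) (by positivity)

lemma tsum_eulerTerm_prime_pow_le (hg1 : g 1 = 1) (hp : p.Prime) (hp14 : 2 ^ 14 ≤ p)
    (hodd : ∀ a, Odd a → |g (p ^ a)| ≤ 2 ^ (4 * a) / √p)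
    (heven : ∀ a, Even a → |g (p ^ a)| ≤ 2 ^ (4 * a)) :
    ∑' a, eulerTerm g (p ^ a) ≤ 1 + 2 ^ 15 / p := by
  have hsum := summable_eulerTerm_prime_pow hp hodd heven
  rw [hsum.tsum_eq_zero_add, pow_zero, eulerTerm_one hg1]
  gcongr
  calc ∑' l, eulerTerm g (p ^ (l + 1))
      ≤ ∑' l : ℕ, 2 ^ 14 / (p : ℝ) * (1 / 2) ^ l :=
        hsum.comp_injective (add_left_injective 1) |>.tsum_le_tsum
          (eulerTerm_prime_pow_succ_le hp hp14 hodd heven)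
          ((summable_geometric_of_lt_one (by norm_num) (by norm_num)).mul_left _)
    _ = 2 ^ 15 / p := by
        rw [tsum_mul_left, tsum_geometric_of_lt_one (by norm_num) (by norm_num)]
        ring

end EulerTerm

theorem stmt13 (I : Finset ℕ) (hI : ∀ p ∈ I, p.Prime) (hIbig : ∀ p ∈ I, 2 ^ 14 ≤ p)
    (g : ℕ → ℝ) (hg1 : g 1 = 1)
    (hgmul : ∀ m n : ℕ, Nat.Coprime m n → g (m * n) = g m * g n)
    (hgodd : ∀ p a : ℕ, p.Prime → Odd a → |g (p ^ a)| ≤ 2 ^ (4 * a) / Real.sqrt p)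
    (hgeven : ∀ p a : ℕ, p.Prime → Even a → |g (p ^ a)| ≤ 2 ^ (4 * a)) :
    (∑' n : ℕ,
        if n ≠ 0 ∧ n.primeFactors ⊆ I then
          8 ^ n.primeFactorsList.length *
            (∏ q ∈ n.primeFactors, (1:ℝ) / (Nat.factorial (n.factorization q) : ℝ)) *
            |g n| / Real.sqrt n
        else 0)
      ≤ Real.exp (2 ^ 15 * ∑ p ∈ I, 1 / (p : ℝ)) := by
  have hsum {p : ℕ} (hp : p.Prime) : Summable (fun a ↦ ‖eulerTerm g (p ^ a)‖) := by
    simpa only [norm_of_nonneg (eulerTerm_nonneg _)] using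
      summable_eulerTerm_prime_pow hp (hgodd p · hp) (hgeven p · hp)
  have hEuler := (EulerProduct.summable_and_hasSum_factoredNumbers_prod_filter_prime_tsum
    (eulerTerm_one hg1) (eulerTerm_mul hgmul) hsum I).2.tsum_eq
  refine (tsum_ite_primeFactors_subset_eq_tsum_factoredNumbers (eulerTerm g) I).trans_le ?_
  rw [hEuler, filter_true_of_mem hI, mul_sum]
  calc ∏ p ∈ I, ∑' a, eulerTerm g (p ^ a)
      ≤ ∏ p ∈ I, (1 + 2 ^ 15 * (1 / (p : ℝ))) := by
        refine prod_le_prod (fun _ _ ↦ tsum_nonneg fun _ ↦ eulerTerm_nonneg _) fun p hp ↦ ?_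
        rw [mul_one_div]
        exact tsum_eulerTerm_prime_pow_le hg1 (hI p hp) (hIbig p hp) (hgodd p · (hI p hp))
          (hgeven p · (hI p hp))
    _ ≤ exp (∑ p ∈ I, 2 ^ 15 * (1 / (p : ℝ))) := prod_one_add_le_exp_sum _ fun _ ↦ by positivity
end

section
/- Let k be a nonnegative integer, I ⊂ [2,∞) a finite set of primes, ν the multiplicative function with ν(p^a) = 1/a!, b a completely multiplicative function with |b(p)| ≤ 4 for all p, and g a multiplicative function with |g(n)| ≤ 2^{4Ω(n)}/√v whenever n = u²v with v squarefree. Then (2k)! | ∑_{n: p|n ⇒ p∈I, Ω(n) = 2k} b(n) ν(n) g(n) / √n | ≤ e^{O(k)} ( (∑_{p∈I} 1/p)^{2k} + (k ∑_{p∈I} 1/p)^k ), with an absolute implied constant. -/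
/-!
Every `n` in the sum is `∏_{p ∈ I} p ^ a_p` with `∑ a_p = 2k`. Writing `a_p = 2 c_p + d_p` with
`d_p ∈ {0, 1}` gives `n = u² v` with `u = ∏ p ^ c_p` and `v = ∏ p ^ d_p` squarefree, so the summand
is at most `2^{12k} ∏_p p^{-c_p} / c_p! · p^{-d_p} / d_p!` since `c_p! d_p! ≤ a_p!`. The map
`a ↦ (c, d)` is injective, and the multinomial theorem sums the right-hand side over all `(c, d)`
with `|c| = l`, `|d| = 2k - 2l` to `P^l / l! · P^{2k-2l} / (2k-2l)!`, where `P = ∑_{p ∈ I} 1/p`.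
Finally `(2k)! / (2k-2l)! ≤ (2k)^{2l}`, `k^l / l! ≤ e^k` and `k^l P^{2k-l} ≤ P^{2k} + (kP)^k`.
-/

open Finset Real ArithmeticFunction
open scoped Nat ArithmeticFunction.Omega

theorem factorial_le_factorial_sub_mul_pow {n m : ℕ} (h : m ≤ n) : n ! ≤ (n - m)! * n ^ m := by
  rw [← Nat.factorial_mul_descFactorial h]
  exact Nat.mul_le_mul_left _ (Nat.descFactorial_le_pow n m)

theorem pow_mul_pow_div_factorial_le {x : ℝ} (hx : 0 ≤ x) {i j a : ℕ} (h : i + j ≤ a) :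
    x ^ i * x ^ j / a ! ≤ x ^ i / i ! * (x ^ j / j !) := by
  have hij : (i ! * j ! : ℝ) ≤ a ! := by
    exact_mod_cast (Nat.le_of_dvd (Nat.factorial_pos _)
      (Nat.factorial_mul_factorial_dvd_factorial_add i j)).trans (Nat.factorial_le h)
  rw [div_mul_div_comm]
  exact div_le_div_of_nonneg_left (by positivity) (by positivity) hij

theorem pow_mul_pow_sub_le_add_pow {x y : ℝ} (hx : 0 ≤ x) (hy : 0 ≤ y) {k l : ℕ} (hl : l ≤ k) :
    y ^ l * x ^ (2 * k - l) ≤ x ^ (2 * k) + (y * x) ^ k := by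
  rcases le_total y x with hyx | hxy
  · calc y ^ l * x ^ (2 * k - l) ≤ x ^ l * x ^ (2 * k - l) := by gcongr
      _ = x ^ (2 * k) := by rw [← pow_add]; congr 1; omega
      _ ≤ _ := le_add_of_nonneg_right (by positivity)
  · calc y ^ l * x ^ (2 * k - l) = y ^ l * x ^ (k - l) * x ^ k := by
          rw [mul_assoc, ← pow_add]; congr 2; omega
      _ ≤ y ^ l * y ^ (k - l) * x ^ k := by gcongr
      _ = (y * x) ^ k := by rw [← pow_add, mul_pow]; congr 2; omega
      _ ≤ _ := le_add_of_nonneg_left (by positivity)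

theorem Finset.prod_pow_eq_sq_mul {ι M : Type*} [CommMonoid M] (s : Finset ι) (x : ι → M)
    (a : ι → ℕ) :
    ∏ i ∈ s, x i ^ a i = (∏ i ∈ s, x i ^ (a i / 2)) ^ 2 * ∏ i ∈ s, x i ^ (a i % 2) := by
  rw [← prod_pow, ← prod_mul_distrib]
  refine prod_congr rfl fun i _ => ?_
  rw [← pow_mul, ← pow_add, mul_comm, Nat.div_add_mod]

theorem squarefree_prod_pow_mod_two {I : Finset ℕ} (hI : ∀ p ∈ I, p.Prime) (a : ℕ → ℕ) :
    Squarefree (∏ p ∈ I, p ^ (a p % 2)) := by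
  refine squarefree_prod_of_pairwise_isCoprime (fun p hp q hq hpq => ?_) fun p hp => ?_
  · exact Nat.coprime_iff_isRelPrime.1
      (Nat.Coprime.pow _ _ ((Nat.coprime_primes (hI p hp) (hI q hq)).2 hpq))
  · rcases Nat.mod_two_eq_zero_or_one (a p) with h | h <;> rw [h]
    · simp
    · simpa using (hI p hp).squarefree

section PrimeSupport

variable {I : Finset ℕ}

theorem Nat.prod_pow_factorization_eq_self_of_primeFactors_subset {n : ℕ} (hn : n ≠ 0)
    (hI : n.primeFactors ⊆ I) : ∏ p ∈ I, p ^ n.factorization p = n := by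
  conv_rhs => rw [← Nat.prod_factorization_pow_eq_self hn]
  exact (Finsupp.prod_of_support_subset _ (by simpa using hI) _ fun _ _ => pow_zero _).symm

theorem Nat.cardFactors_eq_sum_factorization_of_primeFactors_subset {n : ℕ}
    (hI : n.primeFactors ⊆ I) : Ω n = ∑ p ∈ I, n.factorization p := by
  rw [cardFactors_eq_sum_factorization]
  exact Finsupp.sum_of_support_subset _ (by simpa using hI) _ fun _ _ => rfl

theorem Nat.factorization_prod_pow (hI : ∀ p ∈ I, p.Prime) {a : ℕ → ℕ}
    (ha : ∀ p, a p ≠ 0 → p ∈ I) (q : ℕ) : (∏ p ∈ I, p ^ a p).factorization q = a q := by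
  rw [Nat.factorization_prod fun p hp => pow_ne_zero _ (hI p hp).ne_zero, Finset.sum_apply']
  calc ∑ p ∈ I, (p ^ a p).factorization q = ∑ p ∈ I, if p = q then a p else 0 :=
        sum_congr rfl fun p hp => by rw [(hI p hp).factorization_pow, Finsupp.single_apply]
    _ = a q := by
        rw [sum_ite_eq']
        split_ifs with hq
        · rfl
        · by_contra h
          exact hq (ha q (Ne.symm h))

theorem Nat.primeFactors_prod_pow_subset (hI : ∀ p ∈ I, p.Prime) {a : ℕ → ℕ}
    (ha : ∀ p, a p ≠ 0 → p ∈ I) : (∏ p ∈ I, p ^ a p).primeFactors ⊆ I := fun q hq => by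
  rw [← Nat.support_factorization, Finsupp.mem_support_iff, Nat.factorization_prod_pow hI ha] at hq
  exact ha q hq

theorem Nat.cardFactors_prod_pow (hI : ∀ p ∈ I, p.Prime) {a : ℕ → ℕ}
    (ha : ∀ p, a p ≠ 0 → p ∈ I) : Ω (∏ p ∈ I, p ^ a p) = ∑ p ∈ I, a p := by
  rw [Nat.cardFactors_eq_sum_factorization_of_primeFactors_subset
    (Nat.primeFactors_prod_pow_subset hI ha)]
  exact sum_congr rfl fun q _ => Nat.factorization_prod_pow hI ha q

theorem tsum_ite_primeFactors_subset_eq_sum_piAntidiag (hI : ∀ p ∈ I, p.Prime) (m : ℕ)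
    (F : ℕ → ℝ) :
    ∑' n : ℕ, (if n ≠ 0 ∧ n.primeFactors ⊆ I ∧ n.primeFactorsList.length = m then F n else 0)
      = ∑ a ∈ I.piAntidiag m, F (∏ p ∈ I, p ^ a p) := by
  set e : (ℕ → ℕ) → ℕ := fun a => ∏ p ∈ I, p ^ a p
  have hcond : ∀ a ∈ I.piAntidiag m,
      e a ≠ 0 ∧ (e a).primeFactors ⊆ I ∧ (e a).primeFactorsList.length = m := by
    intro a ha
    obtain ⟨hsum, hsupp⟩ := mem_piAntidiag.1 ha
    refine ⟨prod_ne_zero_iff.2 fun p hp => pow_ne_zero _ (hI p hp).ne_zero,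
      Nat.primeFactors_prod_pow_subset hI hsupp, ?_⟩
    rw [← cardFactors_apply, Nat.cardFactors_prod_pow hI hsupp, hsum]
  rw [tsum_eq_sum (s := (I.piAntidiag m).image e), sum_image]
  · exact sum_congr rfl fun a ha => if_pos (hcond a ha)
  · intro a ha a' ha' h
    funext p
    rw [← Nat.factorization_prod_pow hI (mem_piAntidiag.1 ha).2,
      ← Nat.factorization_prod_pow hI (mem_piAntidiag.1 ha').2]
    exact congrArg (fun n => n.factorization p) h
  · intro n hn
    refine if_neg fun ⟨hn0, hsub, hlen⟩ => hn (mem_image.2 ⟨n.factorization, ?_, ?_⟩)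
    · refine mem_piAntidiag.2 ⟨?_, fun p hp => hsub ?_⟩
      · rw [← Nat.cardFactors_eq_sum_factorization_of_primeFactors_subset hsub,
          cardFactors_apply, hlen]
      · rwa [← Nat.support_factorization, Finsupp.mem_support_iff]
    · exact Nat.prod_pow_factorization_eq_self_of_primeFactors_subset hn0 hsub

end PrimeSupport

theorem abs_le_pow_cardFactors {b : ℕ → ℝ} {C : ℝ} (hb1 : b 1 = 1)
    (hbm : ∀ m n : ℕ, b (m * n) = b m * b n) (hbp : ∀ p : ℕ, p.Prime → |b p| ≤ C) {n : ℕ}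
    (hn : n ≠ 0) : |b n| ≤ C ^ Ω n := by
  have hC : 0 ≤ C := (abs_nonneg _).trans (hbp 2 Nat.prime_two)
  induction n using induction_on_primes with
  | zero => exact absurd rfl hn
  | one => simp [hb1]
  | prime_mul p a hp ih =>
    have ha : a ≠ 0 := right_ne_zero_of_mul hn
    rw [hbm, abs_mul, cardFactors_mul hp.ne_zero ha, cardFactors_apply_prime hp, pow_add, pow_one]
    exact mul_le_mul (hbp p hp) (ih ha) (abs_nonneg _) hC

theorem abs_mul_mul_div_sqrt_le {b g : ℕ → ℝ} (hb1 : b 1 = 1)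
    (hbm : ∀ m n : ℕ, b (m * n) = b m * b n) (hbp : ∀ p : ℕ, p.Prime → |b p| ≤ 4)
    (hg : ∀ u v : ℕ, Squarefree v →
      |g (u ^ 2 * v)| ≤ 2 ^ (4 * (u ^ 2 * v).primeFactorsList.length) / Real.sqrt v)
    {u v : ℕ} (hu : u ≠ 0) (hv : Squarefree v) {c : ℝ} (hc : 0 ≤ c) :
    |b (u ^ 2 * v) * c * g (u ^ 2 * v) / √((u ^ 2 * v : ℕ) : ℝ)|
      ≤ 2 ^ (6 * Ω (u ^ 2 * v)) * (c / (u * v)) := by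
  have hv0 : (0 : ℝ) < v := Nat.cast_pos.2 (Nat.pos_of_ne_zero hv.ne_zero)
  have hu0 : (0 : ℝ) < u := Nat.cast_pos.2 (Nat.pos_of_ne_zero hu)
  have hsv : 0 < √(v : ℝ) := Real.sqrt_pos.2 hv0
  have hb := abs_le_pow_cardFactors hb1 hbm hbp (n := u ^ 2 * v)
    (mul_ne_zero (pow_ne_zero 2 hu) hv.ne_zero)
  have hgv := hg u v hv
  rw [← cardFactors_apply] at hgv
  have hsqrt : √((u ^ 2 * v : ℕ) : ℝ) = u * √(v : ℝ) := by
    push_cast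
    rw [Real.sqrt_mul (by positivity), Real.sqrt_sq hu0.le]
  rw [hsqrt, abs_div, abs_of_pos (mul_pos hu0 hsv), abs_mul, abs_mul, abs_of_nonneg hc]
  calc |b (u ^ 2 * v)| * c * |g (u ^ 2 * v)| / (u * √(v : ℝ))
      ≤ 4 ^ Ω (u ^ 2 * v) * c * (2 ^ (4 * Ω (u ^ 2 * v)) / √(v : ℝ)) / (u * √(v : ℝ)) := by
        gcongr
    _ = 2 ^ (6 * Ω (u ^ 2 * v)) * (c / (u * (√(v : ℝ) * √(v : ℝ)))) := by
        rw [show (4 : ℝ) = 2 ^ 2 by norm_num, ← pow_mul]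
        field_simp
        ring
    _ = 2 ^ (6 * Ω (u ^ 2 * v)) * (c / (u * v)) := by rw [Real.mul_self_sqrt hv0.le]

section ExpMonomial

variable {ι : Type*}

noncomputable def expMonomial (s : Finset ι) (x : ι → ℝ) (a : ι → ℕ) : ℝ :=
  ∏ i ∈ s, x i ^ a i / (a i)!

theorem sum_piAntidiag_expMonomial [DecidableEq ι] (s : Finset ι) (x : ι → ℝ) (m : ℕ) :
    ∑ a ∈ s.piAntidiag m, expMonomial s x a = (∑ i ∈ s, x i) ^ m / m ! := by
  rw [sum_pow_eq_sum_piAntidiag, Finset.sum_div]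
  refine sum_congr rfl fun a ha => ?_
  have hm : ((∏ i ∈ s, (a i)! : ℕ) : ℝ) * (Nat.multinomial s a : ℝ) = m ! := by
    rw [← Nat.cast_mul, Nat.multinomial_spec, (mem_piAntidiag.1 ha).1]
  rw [expMonomial, prod_div_distrib, eq_div_iff (by positivity), ← hm]
  push_cast
  field_simp

variable {s : Finset ι} {x : ι → ℝ}

theorem expMonomial_nonneg (hx : ∀ i ∈ s, 0 ≤ x i) (a : ι → ℕ) : 0 ≤ expMonomial s x a :=
  prod_nonneg fun i hi => div_nonneg (pow_nonneg (hx i hi) _) (Nat.cast_nonneg _)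

theorem prod_pow_div_factorial_le_expMonomial_mul (hx : ∀ i ∈ s, 0 ≤ x i) (a : ι → ℕ) :
    ∏ i ∈ s, x i ^ (a i / 2) * x i ^ (a i % 2) / (a i)!
      ≤ expMonomial s x (fun i => a i / 2) * expMonomial s x (fun i => a i % 2) := by
  rw [expMonomial, expMonomial, ← prod_mul_distrib]
  exact prod_le_prod (fun i hi => by have := hx i hi; positivity)
    fun i hi => pow_mul_pow_div_factorial_le (hx i hi) (by omega)

theorem sum_piAntidiag_expMonomial_mul_le [DecidableEq ι] (hx : ∀ i ∈ s, 0 ≤ x i) (m : ℕ) :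
    ∑ a ∈ s.piAntidiag m,
        expMonomial s x (fun i => a i / 2) * expMonomial s x (fun i => a i % 2)
      ≤ ∑ l ∈ range (m / 2 + 1),
          (∑ i ∈ s, x i) ^ l / l ! * ((∑ i ∈ s, x i) ^ (m - 2 * l) / (m - 2 * l)!) := by
  classical
  set T := (range (m / 2 + 1)).sigma fun l => s.piAntidiag l ×ˢ s.piAntidiag (m - 2 * l)
  set split : (ι → ℕ) → (_ : ℕ) × ((ι → ℕ) × (ι → ℕ)) :=
    fun a => ⟨∑ i ∈ s, a i / 2, (fun i => a i / 2, fun i => a i % 2)⟩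
  have hsplit : ∀ a ∈ s.piAntidiag m, split a ∈ T := by
    intro a ha
    obtain ⟨hsum, hsupp⟩ := mem_piAntidiag.1 ha
    have hsplit : 2 * ∑ i ∈ s, a i / 2 + ∑ i ∈ s, a i % 2 = m := by
      rw [← hsum, mul_sum, ← sum_add_distrib]
      exact sum_congr rfl fun i _ => Nat.div_add_mod (a i) 2
    simp only [split, T, mem_sigma, mem_range, mem_product, mem_piAntidiag, true_and]
    exact ⟨by omega, fun i hi => hsupp i (by omega), by omega,
      fun i hi => hsupp i (by omega)⟩
  have hinj : Set.InjOn split (s.piAntidiag m) := by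
    intro a _ a' _ h
    funext i
    have hdiv := congrFun (congrArg (fun z => z.2.1) h) i
    have hmod := congrFun (congrArg (fun z => z.2.2) h) i
    dsimp only [split] at hdiv hmod
    omega
  calc ∑ a ∈ s.piAntidiag m,
        expMonomial s x (fun i => a i / 2) * expMonomial s x (fun i => a i % 2)
      = ∑ z ∈ (s.piAntidiag m).image split, expMonomial s x z.2.1 * expMonomial s x z.2.2 :=
        (sum_image (f := fun z => expMonomial s x z.2.1 * expMonomial s x z.2.2) hinj).symm
    _ ≤ ∑ z ∈ T, expMonomial s x z.2.1 * expMonomial s x z.2.2 :=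
        sum_le_sum_of_subset_of_nonneg (image_subset_iff.2 hsplit) fun z _ _ =>
          mul_nonneg (expMonomial_nonneg hx _) (expMonomial_nonneg hx _)
    _ = _ := by
        rw [sum_sigma]
        refine sum_congr rfl fun l _ => ?_
        rw [sum_product, ← sum_mul_sum, sum_piAntidiag_expMonomial,
          sum_piAntidiag_expMonomial]

end ExpMonomial

theorem abs_summand_le_expMonomial_mul {I : Finset ℕ} (hI : ∀ p ∈ I, p.Prime) {b g : ℕ → ℝ}
    (hb1 : b 1 = 1) (hbm : ∀ m n : ℕ, b (m * n) = b m * b n)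
    (hbp : ∀ p : ℕ, p.Prime → |b p| ≤ 4)
    (hg : ∀ u v : ℕ, Squarefree v →
      |g (u ^ 2 * v)| ≤ 2 ^ (4 * (u ^ 2 * v).primeFactorsList.length) / Real.sqrt v)
    {m : ℕ} {a : ℕ → ℕ} (ha : a ∈ I.piAntidiag m) {n : ℕ} (hn : ∏ p ∈ I, p ^ a p = n) :
    |b n * (∏ p ∈ n.primeFactors, (1 : ℝ) / (n.factorization p)!) * g n / √(n : ℝ)|
      ≤ 2 ^ (6 * m) * (expMonomial I (fun p => 1 / (p : ℝ)) (fun p => a p / 2) *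
          expMonomial I (fun p => 1 / (p : ℝ)) (fun p => a p % 2)) := by
  obtain ⟨hsum, hsupp⟩ := mem_piAntidiag.1 ha
  have hΩ : Ω n = m := by rw [← hn, Nat.cardFactors_prod_pow hI hsupp, hsum]
  have hν : ∏ p ∈ n.primeFactors, (1 : ℝ) / (n.factorization p)! = ∏ p ∈ I, (1 : ℝ) / (a p)! := by
    have hsub : n.primeFactors ⊆ I := hn ▸ Nat.primeFactors_prod_pow_subset hI hsupp
    rw [prod_subset hsub fun p _ hp => by
      rw [← Nat.support_factorization, Finsupp.notMem_support_iff] at hp; simp [hp]]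
    exact prod_congr rfl fun p _ => by rw [← hn, Nat.factorization_prod_pow hI hsupp]
  set u := ∏ p ∈ I, p ^ (a p / 2)
  set v := ∏ p ∈ I, p ^ (a p % 2)
  have huv : u ^ 2 * v = n := hn ▸ (prod_pow_eq_sq_mul I (fun p : ℕ => p) a).symm
  have hu : u ≠ 0 := prod_ne_zero_iff.2 fun p hp => pow_ne_zero _ (hI p hp).ne_zero
  have hcast : (∏ p ∈ I, (1 : ℝ) / (a p)!) / (u * v)
      = ∏ p ∈ I, (1 / (p : ℝ)) ^ (a p / 2) * (1 / (p : ℝ)) ^ (a p % 2) / (a p)! := by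
    simp only [u, v, Nat.cast_prod, Nat.cast_pow, ← prod_mul_distrib, ← prod_div_distrib]
    exact prod_congr rfl fun p _ => by ring
  rw [hν]
  calc _ ≤ 2 ^ (6 * m) * ((∏ p ∈ I, (1 : ℝ) / (a p)!) / (u * v)) := by
        have := abs_mul_mul_div_sqrt_le hb1 hbm hbp hg hu (squarefree_prod_pow_mod_two hI a)
          (prod_nonneg fun p _ => by positivity : 0 ≤ ∏ p ∈ I, (1 : ℝ) / (a p)!)
        rwa [huv, hΩ] at this
    _ ≤ _ := by
        rw [hcast]
        gcongr
        exact prod_pow_div_factorial_le_expMonomial_mul (fun p _ => by positivity) a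

theorem factorial_mul_pow_div_factorial_mul_le {P : ℝ} (hP : 0 ≤ P) {k l : ℕ} (hl : l ≤ k) :
    ((2 * k)! : ℝ) * (P ^ l / l ! * (P ^ (2 * k - 2 * l) / (2 * k - 2 * l)!))
      ≤ 4 ^ k * exp k * (P ^ (2 * k) + (k * P) ^ k) := by
  have hfac : ((2 * k)! : ℝ) ≤ (2 * k - 2 * l)! * ((2 * k : ℕ) : ℝ) ^ (2 * l) := by
    exact_mod_cast factorial_le_factorial_sub_mul_pow (by omega)
  have hpow : P ^ l * P ^ (2 * k - 2 * l) = P ^ (2 * k - l) := by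
    rw [← pow_add]; congr 1; omega
  calc ((2 * k)! : ℝ) * (P ^ l / l ! * (P ^ (2 * k - 2 * l) / (2 * k - 2 * l)!))
      ≤ (2 * k - 2 * l)! * ((2 * k : ℕ) : ℝ) ^ (2 * l)
          * (P ^ l / l ! * (P ^ (2 * k - 2 * l) / (2 * k - 2 * l)!)) := by gcongr
    _ = 4 ^ l * ((k : ℝ) ^ l / l !) * ((k : ℝ) ^ l * P ^ (2 * k - l)) := by
        rw [← hpow, pow_mul]
        push_cast
        field_simp
        ring
    _ ≤ 4 ^ k * exp k * (P ^ (2 * k) + (k * P) ^ k) := by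
        gcongr
        · norm_num
        · exact pow_div_factorial_le_exp _ (Nat.cast_nonneg k) l
        · exact pow_mul_pow_sub_le_add_pow hP (Nat.cast_nonneg k) hl

theorem two_pow_le_exp (n : ℕ) : (2 : ℝ) ^ n ≤ exp n := by
  rw [← exp_one_pow]
  gcongr
  linarith [add_one_le_exp (1 : ℝ)]

theorem factorial_mul_sum_range_le {P : ℝ} (hP : 0 ≤ P) (k : ℕ) :
    ((2 * k)! : ℝ) * ∑ l ∈ range (k + 1), P ^ l / l ! * (P ^ (2 * k - 2 * l) / (2 * k - 2 * l)!)
      ≤ exp (4 * k) * (P ^ (2 * k) + (k * P) ^ k) := by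
  rw [mul_sum]
  calc _ ≤ ∑ l ∈ range (k + 1), 4 ^ k * exp k * (P ^ (2 * k) + (k * P) ^ k) :=
        sum_le_sum fun l hl =>
          factorial_mul_pow_div_factorial_mul_le hP (Nat.lt_succ_iff.1 (mem_range.1 hl))
    _ = (k + 1) * 2 ^ (2 * k) * exp k * (P ^ (2 * k) + (k * P) ^ k) := by
        rw [sum_const, card_range, nsmul_eq_mul, show (4 : ℝ) = 2 ^ 2 by norm_num, ← pow_mul]
        push_cast; ring
    _ ≤ exp k * exp (2 * k : ℕ) * exp k * (P ^ (2 * k) + (k * P) ^ k) := by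
        gcongr
        · exact add_one_le_exp _
        · exact two_pow_le_exp _
    _ = exp (4 * k) * (P ^ (2 * k) + (k * P) ^ k) := by
        rw [← exp_add, ← exp_add]; push_cast; ring_nf

theorem stmt14 :
    ∃ C : ℝ, 0 < C ∧
      ∀ (k : ℕ) (I : Finset ℕ), (∀ p ∈ I, p.Prime) →
      ∀ (b g : ℕ → ℝ), b 1 = 1 → (∀ m n : ℕ, b (m * n) = b m * b n) →
      (∀ p : ℕ, p.Prime → |b p| ≤ 4) →
      (∀ u v : ℕ, Squarefree v →
        |g (u ^ 2 * v)| ≤ 2 ^ (4 * (u ^ 2 * v).primeFactorsList.length) / Real.sqrt v) →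
      (Nat.factorial (2 * k) : ℝ) *
        |∑' n : ℕ,
          if n ≠ 0 ∧ n.primeFactors ⊆ I ∧ n.primeFactorsList.length = 2 * k then
            b n * (∏ p ∈ n.primeFactors, (1:ℝ) / (Nat.factorial (n.factorization p) : ℝ)) *
              g n / Real.sqrt n
          else 0|
        ≤ Real.exp (C * k) *
            ((∑ p ∈ I, 1 / (p : ℝ)) ^ (2 * k) + ((k : ℝ) * ∑ p ∈ I, 1 / (p : ℝ)) ^ k) := by
  refine ⟨16, by norm_num, fun k I hI b g hb1 hbm hbp hg => ?_⟩
  set P := ∑ p ∈ I, 1 / (p : ℝ)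
  have hx : ∀ p ∈ I, 0 ≤ 1 / (p : ℝ) := fun p _ => by positivity
  have hP : 0 ≤ P := sum_nonneg hx
  rw [tsum_ite_primeFactors_subset_eq_sum_piAntidiag hI]
  set W := expMonomial I fun p => 1 / (p : ℝ)
  calc _ ≤ ((2 * k)! : ℝ) * ∑ a ∈ I.piAntidiag (2 * k),
          2 ^ (6 * (2 * k)) * (W (fun p => a p / 2) * W (fun p => a p % 2)) := by
        gcongr
        refine (abs_sum_le_sum_abs _ _).trans (sum_le_sum fun a ha => ?_)
        exact abs_summand_le_expMonomial_mul hI hb1 hbm hbp hg ha rfl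
    _ = 2 ^ (12 * k) * (((2 * k)! : ℝ) * ∑ a ∈ I.piAntidiag (2 * k),
          W (fun p => a p / 2) * W (fun p => a p % 2)) := by
        rw [← mul_sum]
        ring
    _ ≤ 2 ^ (12 * k) * (((2 * k)! : ℝ) * ∑ l ∈ range (k + 1),
          P ^ l / l ! * (P ^ (2 * k - 2 * l) / (2 * k - 2 * l)!)) := by
        gcongr
        have h := sum_piAntidiag_expMonomial_mul_le hx (2 * k)
        rwa [Nat.mul_div_cancel_left k two_pos] at h
    _ ≤ exp (12 * k : ℕ) * (exp (4 * k) * (P ^ (2 * k) + (k * P) ^ k)) :=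
        mul_le_mul (two_pow_le_exp _) (factorial_mul_sum_range_le hP k) (by positivity)
          (exp_pos _).le
    _ = exp (16 * k) * (P ^ (2 * k) + (k * P) ^ k) := by
        rw [← mul_assoc, ← exp_add]; push_cast; ring_nf
end
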